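/- arXiv:1708.07923 — 6 statements merged into one kernel-verified Lean document; each statement's English description precedes it below -/
import Mathlib

section
/- Let R be a ℂ-algebra which is a domain, and let Γ be a finite group acting on R by ℂ-algebra automorphisms such that the fixed ring R^Γ is a simple ring. Then R is a simple ring. -/
/-!
Let `I ≠ 0` be an ideal of `R` and `K ⊆ I` the largest `Γ`-stable ideal inside it; `K ≠ 0`
since it contains the product of the `Γ`-translates of a nonzero element of `I`. Now `K ∩ R^Γ`
is an ideal of the simple ring `R^Γ`. If it is everything, `1 ∈ I`. If it is `0`, the trace
`∑ γ, γ y` vanishes on `K`, and then every `x ∈ K` satisfies `x ^ |Γ| = 0`, which is impossible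
in a domain.

For the nilpotence, attach to a word `w ∈ Γ^k` the product `x_w = w₁(x) ⋯ w_k(x)`. Multiplying a
nonempty block of letters of `w` by `γ` and summing over `γ` gives `A * tr(B) * C = 0` with
`B ∈ K`. For `k ≥ |Γ|` these block sums span `ℂ^(Γ^k)`, so `x ^ k = x_(1,…,1) = 0`: if `φ` is
orthogonal to all of them, the maps `γ ↦ φ ∘ (multiply the first j letters by γ)`,
`j = 0, …, k`, are `k + 1` pairwise orthogonal vectors of `L²(Γ, ℂ^(Γ^k))` of squared norm
`|Γ| ‖φ‖²`, all equal to `φ` at `γ = 1`, whence `(k + 1)² ‖φ‖² ≤ (k + 1) |Γ| ‖φ‖²`.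
-/

def fixedSubalgebra {k R Γ : Type*} [CommSemiring k] [Semiring R] [Algebra k R]
    [Monoid Γ] (act : Γ →* (R ≃ₐ[k] R)) : Subalgebra k R where
  carrier := {x | ∀ g : Γ, act g x = x}
  mul_mem' {x y} hx hy g := by simp [map_mul, hx g, hy g]
  add_mem' {x y} hx hy g := by simp [map_add, hx g, hy g]
  algebraMap_mem' c g := by simp

open Finset Fintype
open scoped InnerProductSpace

section Orthogonality

variable {𝕜 E ι Γ : Type*} [RCLike 𝕜] [NormedAddCommGroup E] [InnerProductSpace 𝕜 E]
  [Fintype ι] [Fintype Γ]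

theorem sum_norm_sum_sq_eq_of_pairwise (f : ι → Γ → E)
    (h : Pairwise fun a b => ∑ γ, ⟪f a γ, f b γ⟫_𝕜 = 0) :
    ∑ γ, ‖∑ a, f a γ‖ ^ 2 = ∑ a, ∑ γ, ‖f a γ‖ ^ 2 := by
  have hsq (γ : Γ) : ‖∑ a, f a γ‖ ^ 2 = ∑ a, ∑ b, RCLike.re ⟪f a γ, f b γ⟫_𝕜 := by
    rw [@norm_sq_eq_re_inner 𝕜, sum_inner]
    simp only [inner_sum, map_sum]
  calc ∑ γ, ‖∑ a, f a γ‖ ^ 2 = ∑ a, ∑ b, RCLike.re (∑ γ, ⟪f a γ, f b γ⟫_𝕜) := by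
        simp only [hsq, map_sum]
        rw [Finset.sum_comm]
        exact sum_congr rfl fun a _ => Finset.sum_comm
    _ = ∑ a, RCLike.re (∑ γ, ⟪f a γ, f a γ⟫_𝕜) :=
        sum_congr rfl fun a _ => Finset.sum_eq_single a
          (fun b _ hba => by rw [h hba.symm, map_zero]) (by simp)
    _ = ∑ a, ∑ γ, ‖f a γ‖ ^ 2 := by simp [inner_self_eq_norm_sq_to_K]

theorem eq_zero_of_pairwise_orthogonal_of_card_lt (f : ι → Γ → E) (γ₀ : Γ) (v : E)
    (hv : ∀ a, f a γ₀ = v) (hnorm : ∀ a γ, ‖f a γ‖ = ‖v‖)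
    (horth : Pairwise fun a b => ∑ γ, ⟪f a γ, f b γ⟫_𝕜 = 0) (hcard : card Γ < card ι) :
    v = 0 := by
  have key : (card ι : ℝ) ^ 2 * ‖v‖ ^ 2 ≤ card ι * card Γ * ‖v‖ ^ 2 :=
    calc (card ι : ℝ) ^ 2 * ‖v‖ ^ 2 = ‖∑ a, f a γ₀‖ ^ 2 := by
          simp [hv, RCLike.norm_nsmul 𝕜, mul_pow]
      _ ≤ ∑ γ, ‖∑ a, f a γ‖ ^ 2 :=
          single_le_sum (f := fun γ => ‖∑ a, f a γ‖ ^ 2) (fun _ _ => sq_nonneg _) (mem_univ γ₀)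
      _ = ∑ a, ∑ γ, ‖f a γ‖ ^ 2 := sum_norm_sum_sq_eq_of_pairwise f horth
      _ = card ι * card Γ * ‖v‖ ^ 2 := by simp [hnorm, mul_assoc]
  have hlt : (card Γ : ℝ) < card ι := by exact_mod_cast hcard
  have hm : (0 : ℝ) < card ι := lt_of_le_of_lt (Nat.cast_nonneg _) hlt
  have hle : (card ι : ℝ) * ‖v‖ ^ 2 ≤ card Γ * ‖v‖ ^ 2 :=
    le_of_mul_le_mul_left (by linarith) hm
  have : ‖v‖ ^ 2 ≤ 0 := by nlinarith
  simpa using this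

theorem eq_zero_of_sum_perm_mul_inv_eq_zero [LinearOrder ι] {W : Type*} [Fintype W]
    (σ : ι → Γ → Equiv.Perm W) (γ₀ : Γ) (hσ : ∀ a, σ a γ₀ = 1) (φ : W → 𝕜)
    (hφ : ∀ a b, a < b → ∀ u, ∑ γ, φ (σ b γ ((σ a γ)⁻¹ u)) = 0) (hcard : card Γ < card ι) :
    φ = 0 := by
  let f (a : ι) (γ : Γ) : EuclideanSpace 𝕜 W :=
    LinearIsometryEquiv.piLpCongrLeft 2 𝕜 𝕜 (σ a γ).symm (WithLp.toLp 2 φ)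
  have hf (a : ι) (γ : Γ) (w : W) : (f a γ).ofLp w = φ (σ a γ w) := by
    simp [f, LinearIsometryEquiv.piLpCongrLeft_apply]
  have horth_lt (a b : ι) (hab : a < b) : ∑ γ, ⟪f a γ, f b γ⟫_𝕜 = 0 := by
    have hinner (γ : Γ) : ⟪f a γ, f b γ⟫_𝕜 =
        ∑ u, (starRingEnd 𝕜) (φ u) * φ (σ b γ ((σ a γ)⁻¹ u)) := by
      rw [PiLp.inner_apply, ← Equiv.sum_comp (σ a γ)
        (fun u => (starRingEnd 𝕜) (φ u) * φ (σ b γ ((σ a γ)⁻¹ u)))]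
      simp [hf, mul_comm]
    simp only [hinner]
    rw [Finset.sum_comm]
    simp only [← Finset.mul_sum, hφ a b hab, mul_zero, sum_const_zero]
  have horth : Pairwise fun a b => ∑ γ, ⟪f a γ, f b γ⟫_𝕜 = 0 := by
    intro a b hab
    rcases hab.lt_or_gt with hab | hba
    · exact horth_lt a b hab
    · rw [← star_eq_zero, ← horth_lt b a hba]
      simp [inner_conj_symm]
  have h0 := eq_zero_of_pairwise_orthogonal_of_card_lt f γ₀ (WithLp.toLp 2 φ)
    (fun a => by ext w; simp [hf, hσ]) (fun a γ => LinearIsometryEquiv.norm_map _ _) horth hcard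
  simpa using h0

end Orthogonality

section Words

variable {Γ : Type*} [Group Γ] {k : ℕ}

def prefixMul (j : ℕ) (γ : Γ) : Equiv.Perm (Fin k → Γ) :=
  Equiv.piCongrRight fun t => if (t : ℕ) < j then Equiv.mulLeft γ else Equiv.refl Γ

def blockMul (i j : ℕ) (γ : Γ) (w : Fin k → Γ) : Fin k → Γ :=
  fun t => if i ≤ (t : ℕ) ∧ (t : ℕ) < j then γ * w t else w t

theorem prefixMul_one (j : ℕ) : prefixMul j (1 : Γ) = (1 : Equiv.Perm (Fin k → Γ)) := by
  ext w t
  by_cases h : (t : ℕ) < j <;> simp [prefixMul, h]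

theorem prefixMul_mul_inv_apply {i j : ℕ} (hij : i ≤ j) (γ : Γ) (w : Fin k → Γ) :
    prefixMul j γ ((prefixMul i γ)⁻¹ w) = blockMul i j γ w := by
  ext t
  simp only [prefixMul, blockMul, Equiv.Perm.inv_def, Equiv.piCongrRight_apply,
    Equiv.piCongrRight_symm_apply, Pi.map_apply]
  split_ifs <;> simp <;> omega

theorem ofFn_blockMul {i j : ℕ} (hij : i ≤ j) (γ : Γ) (w : Fin k → Γ) :
    List.ofFn (blockMul i j γ w) =
      (List.ofFn w).take i ++ (((List.ofFn w).drop i).take (j - i)).map (γ * ·) ++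
        (List.ofFn w).drop j := by
  apply List.ext_getElem <;> grind [blockMul]

end Words

section Span

variable {𝕜 Γ : Type*} [RCLike 𝕜] [Group Γ] [Fintype Γ] {k : ℕ}

theorem eq_zero_of_sum_blockMul_eq_zero (hk : card Γ ≤ k) (φ : (Fin k → Γ) → 𝕜)
    (hφ : ∀ i j, i < j → j ≤ k → ∀ w, ∑ γ, φ (blockMul i j γ w) = 0) : φ = 0 :=
  eq_zero_of_sum_perm_mul_inv_eq_zero (ι := Fin (k + 1)) (fun j => prefixMul j) 1
    (fun _ => prefixMul_one _) φ
    (fun a b hab u => by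
      simpa only [prefixMul_mul_inv_apply (Fin.le_of_lt hab)] using hφ a b hab (by omega) u)
    (by simpa using Nat.lt_succ_of_le hk)

variable [DecidableEq Γ]

def blockSum (i j : ℕ) (w : Fin k → Γ) : (Fin k → Γ) → 𝕜 :=
  ∑ γ, Pi.single (blockMul i j γ w) (1 : 𝕜)

theorem span_blockSum_eq_top (hk : card Γ ≤ k) :
    Submodule.span 𝕜 {v | ∃ (i j : ℕ) (w : Fin k → Γ), i < j ∧ j ≤ k ∧ blockSum (𝕜 := 𝕜) i j w = v}
      = ⊤ := by
  by_contra hne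
  obtain ⟨L, hL0, hle⟩ := Submodule.exists_le_ker_of_lt_top _ (lt_top_iff_ne_top.2 hne)
  have hL : (fun w => L (Pi.single w 1)) = 0 := by
    refine eq_zero_of_sum_blockMul_eq_zero hk _ fun i j hij hjk w => ?_
    rw [← map_sum]
    exact hle (Submodule.subset_span ⟨i, j, w, hij, hjk, rfl⟩)
  exact hL0 <| (Pi.basisFun 𝕜 (Fin k → Γ)).ext fun w => by simpa using congrFun hL w

end Span

section Nil

variable {𝕜 R Γ : Type*} [RCLike 𝕜] [Ring R] [Algebra 𝕜 R] [Group Γ] [Fintype Γ]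
  (act : Γ →* (R ≃ₐ[𝕜] R))

theorem sum_prod_map_act_append_eq_zero {K : TwoSidedIdeal R}
    (hK : ∀ γ, ∀ y ∈ K, act γ y ∈ K) (htr : ∀ y ∈ K, ∑ γ, act γ y = 0) {x : R} (hx : x ∈ K)
    (p m s : List Γ) (hm : m ≠ []) :
    ∑ γ, ((p ++ m.map (γ * ·) ++ s).map fun g => act g x).prod = 0 := by
  have hB : (m.map fun g => act g x).prod ∈ K := by
    obtain ⟨g, m', rfl⟩ := List.exists_cons_of_ne_nil hm
    simpa using K.mul_mem_right _ _ (hK g x hx)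
  have hmid (γ : Γ) :
      (m.map fun g => act (γ * g) x).prod = act γ (m.map fun g => act g x).prod := by
    simp [map_list_prod, List.map_map, Function.comp_def, map_mul]
  simp only [List.map_append, List.prod_append, List.map_map, Function.comp_def, hmid,
    ← Finset.sum_mul, ← Finset.mul_sum, htr _ hB, mul_zero, zero_mul]

theorem pow_card_eq_zero_of_sum_eq_zero {K : TwoSidedIdeal R}
    (hK : ∀ γ, ∀ y ∈ K, act γ y ∈ K) (htr : ∀ y ∈ K, ∑ γ, act γ y = 0) {x : R} (hx : x ∈ K) :
    x ^ card Γ = 0 := by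
  classical
  let word (w : Fin (card Γ) → Γ) : R := ((List.ofFn w).map fun g => act g x).prod
  let ev := Fintype.linearCombination 𝕜 word
  have hev : ev = 0 := by
    refine LinearMap.ext_on (span_blockSum_eq_top le_rfl) ?_
    rintro _ ⟨i, j, w, hij, hjk, rfl⟩
    simp only [blockSum, map_sum, ev, Fintype.linearCombination_apply_single, one_smul, word,
      ofFn_blockMul hij.le, LinearMap.zero_apply, sum_const_zero]
    refine sum_prod_map_act_append_eq_zero act hK htr hx _ _ _ ?_
    simp only [ne_eq, List.take_eq_nil_iff, List.drop_eq_nil_iff, List.length_ofFn]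
    omega
  simpa [ev, word, Fintype.linearCombination_apply_single, Function.comp_def, List.ofFn_const]
    using LinearMap.congr_fun hev (Pi.single 1 1)

end Nil

section StableCore

variable {k R Γ : Type*} [CommRing k] [Ring R] [Algebra k R] [Group Γ]
  (act : Γ →* (R ≃ₐ[k] R))

def stableCore (I : TwoSidedIdeal R) : TwoSidedIdeal R :=
  ⨅ γ, TwoSidedIdeal.comap (act γ) I

theorem mem_stableCore {I : TwoSidedIdeal R} {y : R} :
    y ∈ stableCore act I ↔ ∀ γ, act γ y ∈ I := by
  simp [stableCore, TwoSidedIdeal.mem_iInf, TwoSidedIdeal.mem_comap]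

theorem stableCore_le (I : TwoSidedIdeal R) : stableCore act I ≤ I := fun y hy => by
  simpa using (mem_stableCore act).1 hy 1

theorem act_mem_stableCore {I : TwoSidedIdeal R} (γ : Γ) {y : R} (hy : y ∈ stableCore act I) :
    act γ y ∈ stableCore act I :=
  (mem_stableCore act).2 fun δ => by simpa using (mem_stableCore act).1 hy (δ * γ)

theorem exists_ne_zero_mem_stableCore [IsDomain R] [Fintype Γ] {I : TwoSidedIdeal R}
    (hI : I ≠ ⊥) : ∃ p ≠ 0, p ∈ stableCore act I := by
  obtain ⟨a, haI, ha0⟩ : ∃ a ∈ I, a ≠ 0 := by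
    by_contra! h
    exact hI (eq_bot_iff.2 fun x hx => (TwoSidedIdeal.mem_bot _).2 (h x hx))
  refine ⟨(univ.toList.map fun γ => act γ a).prod, ?_, (mem_stableCore act).2 fun δ => ?_⟩
  · exact List.prod_ne_zero (by simpa using ha0)
  · rw [map_list_prod, List.map_map]
    exact I.listProd_mem _ _ ⟨δ⁻¹, by simp, by simpa using haI⟩

variable [Fintype Γ]

theorem sum_act_mem_fixedSubalgebra (y : R) : ∑ γ, act γ y ∈ fixedSubalgebra act := fun δ => by
  simp only [map_sum]
  exact Fintype.sum_equiv (Equiv.mulLeft δ) _ _ fun γ => by simp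

theorem sum_act_eq_zero_of_comap_eq_bot {K : TwoSidedIdeal R}
    (hK : ∀ γ, ∀ y ∈ K, act γ y ∈ K) (hJ : K.comap (fixedSubalgebra act).val = ⊥)
    {y : R} (hy : y ∈ K) : ∑ γ, act γ y = 0 := by
  have hmem : (⟨_, sum_act_mem_fixedSubalgebra act y⟩ : fixedSubalgebra act) ∈
      K.comap (fixedSubalgebra act).val :=
    (TwoSidedIdeal.mem_comap _).2 (K.finsetSum_mem _ _ fun γ _ => hK γ y hy)
  rw [hJ, TwoSidedIdeal.mem_bot _] at hmem
  simpa using congrArg Subtype.val hmem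

end StableCore

/-- if `R` is a `ℂ`-domain and a finite group `Γ` acts on `R` by
`ℂ`-algebra automorphisms so that the fixed ring `R^Γ` is a simple ring, then
`R` itself is a simple ring. -/
theorem isSimpleRing_of_fixed_isSimpleRing
    (R : Type*) [Ring R] [IsDomain R] [Algebra ℂ R]
    (Γ : Type*) [Group Γ] [Finite Γ]
    (act : Γ →* (R ≃ₐ[ℂ] R))
    (hsimple : IsSimpleRing ↥(fixedSubalgebra act)) :
    IsSimpleRing R := by
  have := Fintype.ofFinite Γ
  refine IsSimpleRing.of_eq_bot_or_eq_top fun I => or_iff_not_imp_left.2 fun hI => ?_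
  set K := stableCore act I
  have hK (γ : Γ) (y : R) : y ∈ K → act γ y ∈ K := act_mem_stableCore act γ
  rcases eq_bot_or_eq_top (K.comap (fixedSubalgebra act).val) with hJ | hJ
  · obtain ⟨p, hp0, hpK⟩ := exists_ne_zero_mem_stableCore act hI
    have hnil := pow_card_eq_zero_of_sum_eq_zero act hK
      (fun _ => sum_act_eq_zero_of_comap_eq_bot act hK hJ) hpK
    exact (hp0 ((pow_eq_zero_iff card_ne_zero).1 hnil)).elim
  · have h1J : (1 : fixedSubalgebra act) ∈ K.comap (fixedSubalgebra act).val := by simp [hJ]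
    have h1K : (1 : R) ∈ K := by simpa using (TwoSidedIdeal.mem_comap _).1 h1J
    exact (TwoSidedIdeal.one_mem_iff I).1 (stableCore_le act I h1K)
end

section
/- Let R be a ℂ-algebra which is a domain, and let Γ be a finite group acting on R by ℂ-algebra automorphisms such that the fixed ring A = R^Γ is a simple ring whose center is ℂ·1. Then the center of R is ℂ·1. -/
/-- if `R` is a `ℂ`-domain and a finite group `Γ` acts on `R` by
`ℂ`-algebra automorphisms so that the fixed ring `A = R^Γ` is a simple ring
with center `ℂ·1`, then the center of `R` is `ℂ·1`. -/
theorem center_eq_scalars_of_fixed_simple_central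
    (R : Type*) [Ring R] [IsDomain R] [Algebra ℂ R]
    (Γ : Type*) [Group Γ] [Finite Γ]
    (act : Γ →* (R ≃ₐ[ℂ] R))
    (hsimple : IsSimpleRing ↥(fixedSubalgebra act))
    (hcenter : Subalgebra.center ℂ ↥(fixedSubalgebra act) = ⊥) :
    Subalgebra.center ℂ R = ⊥ := by
  classical
  letI : Fintype Γ := Fintype.ofFinite Γ
  set Z := Subalgebra.center ℂ R with hZdef
  -- the action preserves the center
  have key : ∀ (g : Γ) (w : R), w ∈ Z → act g w ∈ Z := by
    intro g w hw
    rw [hZdef, Subalgebra.mem_center_iff] at hw ⊢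
    intro b
    have hb : act g (act g⁻¹ b) = b := by
      rw [← AlgEquiv.mul_apply, ← map_mul, mul_inv_cancel, map_one, AlgEquiv.one_apply]
    calc b * act g w = act g (act g⁻¹ b) * act g w := by rw [hb]
      _ = act g (act g⁻¹ b * w) := by rw [map_mul]
      _ = act g (w * act g⁻¹ b) := by rw [hw]
      _ = act g w * act g (act g⁻¹ b) := by rw [map_mul]
      _ = act g w * b := by rw [hb]
  -- set up the induced action on the center
  letI : SMul Γ Z := ⟨fun g z => ⟨act g z.1, key g z.1 z.2⟩⟩
  have smul_val : ∀ (g : Γ) (z : Z), (g • z).1 = act g z.1 := fun _ _ => rfl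
  letI : MulSemiringAction Γ Z :=
  { one_smul := fun z => Subtype.ext (by rw [smul_val, map_one, AlgEquiv.one_apply])
    mul_smul := fun g h z => Subtype.ext (by
      rw [smul_val, smul_val, smul_val, map_mul, AlgEquiv.mul_apply])
    smul_zero := fun g => Subtype.ext (by
      rw [smul_val, ZeroMemClass.coe_zero, map_zero])
    smul_add := fun g x y => Subtype.ext (by
      rw [smul_val, AddMemClass.coe_add, map_add, AddMemClass.coe_add, smul_val, smul_val])
    smul_one := fun g => Subtype.ext (by rw [smul_val, OneMemClass.coe_one, map_one])
    smul_mul := fun g x y => Subtype.ext (by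
      rw [smul_val, MulMemClass.coe_mul, map_mul, MulMemClass.coe_mul, smul_val, smul_val]) }
  -- every element of the center is integral over ℂ
  suffices h : ∀ z : Z, ∃ c : ℂ, algebraMap ℂ R c = z.1 by
    apply le_antisymm _ bot_le
    intro z hz
    obtain ⟨c, hc⟩ := h ⟨z, hz⟩
    exact (Algebra.mem_bot).2 ⟨c, hc⟩
  intro x
  have hcoeff : ∀ n : ℕ, (prodXSubSMul Γ Z x).coeff n ∈ Set.range (algebraMap ℂ Z) := by
    intro n
    set c : Z := (prodXSubSMul Γ Z x).coeff n with hc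
    have hfix : ∀ g : Γ, act g c.1 = c.1 := by
      intro g
      have := prodXSubSMul.coeff Γ Z x g n
      rw [← hc] at this
      exact congrArg Subtype.val this
    -- c.1 lies in the fixed subalgebra and is central in it
    have hmem : c.1 ∈ fixedSubalgebra act := hfix
    have hcent : (⟨c.1, hmem⟩ : ↥(fixedSubalgebra act)) ∈
        Subalgebra.center ℂ ↥(fixedSubalgebra act) := by
      rw [Subalgebra.mem_center_iff]
      intro b
      exact Subtype.ext ((Subalgebra.mem_center_iff.1 c.2) b.1)
    rw [hcenter, Algebra.mem_bot] at hcent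
    obtain ⟨r, hr⟩ := hcent
    refine ⟨r, ?_⟩
    apply Subtype.ext
    have : algebraMap ℂ R r = c.1 := congrArg Subtype.val hr
    exact this
  -- lift the monic polynomial to ℂ
  have hlifts : prodXSubSMul Γ Z x ∈ Polynomial.lifts (algebraMap ℂ Z) := by
    rw [Polynomial.lifts_iff_coeff_lifts]
    exact hcoeff
  obtain ⟨q, hq, -, hqmonic⟩ :=
    Polynomial.lifts_and_degree_eq_and_monic hlifts (prodXSubSMul.monic Γ Z x)
  have hint : IsIntegral ℂ x := by
    refine ⟨q, hqmonic, ?_⟩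
    rw [Polynomial.eval₂_eq_eval_map, hq]
    exact prodXSubSMul.eval Γ Z x
  have hdeg : (minpoly ℂ x).degree = 1 :=
    IsAlgClosed.degree_eq_one_of_irreducible ℂ (minpoly.irreducible hint)
  obtain ⟨c, hc⟩ := minpoly.mem_range_of_degree_eq_one ℂ x hdeg
  exact ⟨c, congrArg Subtype.val hc⟩
end

section
/- Let R be a ℂ-algebra which is a domain and whose center is ℂ·1. Let g be a ring automorphism of R of finite order which is inner, i.e., there exists a unit a ∈ R with g(x) = a x a⁻¹ for all x ∈ R. Then g is the identity automorphism (and a ∈ ℂ·1). In particular, any finite group acting faithfully by automorphisms on such R acts by outer automorphisms. -/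
/-!
If `g = (x ↦ a x a⁻¹)` satisfies `g ^ n = 1`, then conjugation by `a ^ n` is trivial,
so `a ^ n` is central, hence a scalar `c`. Then `a` is a root of `X ^ n - c`, so it is integral
over `ℂ`; in a domain the minimal polynomial of `a` is irreducible, hence linear since `ℂ` is
algebraically closed, so `a` itself is a scalar and `g` is the identity.
-/

namespace IsAlgClosed

variable {k R : Type*} [Field k] [IsAlgClosed k] [Ring R] [IsDomain R] [Algebra k R]

theorem mem_range_algebraMap_of_isIntegral {x : R} (hx : IsIntegral k x) :
    x ∈ (algebraMap k R).range :=
  minpoly.mem_range_of_degree_eq_one k x (degree_eq_one_of_irreducible k (minpoly.irreducible hx))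

theorem mem_range_algebraMap_of_pow_mem {x : R} {n : ℕ} (hn : 0 < n)
    (hx : x ^ n ∈ (algebraMap k R).range) : x ∈ (algebraMap k R).range := by
  obtain ⟨c, hc⟩ := hx
  exact mem_range_algebraMap_of_isIntegral (.of_pow hn (hc ▸ isIntegral_algebraMap))

end IsAlgClosed

namespace Units

section Semiring

variable {R : Type*} [Semiring R]

def innerRingAut : Rˣ →* RingAut R :=
  (MulSemiringAction.toRingAut (ConjAct Rˣ) R).comp ConjAct.toConjAct.toMonoidHom

@[simp]
theorem innerRingAut_apply (u : Rˣ) (x : R) : innerRingAut u x = u * x * ↑u⁻¹ := rfl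

theorem innerRingAut_eq_one_iff {u : Rˣ} :
    innerRingAut u = 1 ↔ ∀ x : R, Commute (u : R) x := by
  simp only [RingEquiv.ext_iff, innerRingAut_apply, RingAut.one_apply, mul_inv_eq_iff_eq_mul]
  rfl

end Semiring

theorem innerRingAut_eq_one_of_mem_range {k R : Type*} [CommRing k] [Ring R] [Algebra k R]
    {u : Rˣ} (hu : (u : R) ∈ (algebraMap k R).range) :
    innerRingAut u = 1 := by
  obtain ⟨c, hc⟩ := hu
  exact innerRingAut_eq_one_iff.2 fun x => hc ▸ Algebra.commutes c x

theorem val_mem_range_algebraMap_of_innerRingAut_pow_eq_one {k R : Type*} [Field k]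
    [IsAlgClosed k] [Ring R] [IsDomain R] [Algebra k R]
    (hcenter : Subalgebra.center k R = ⊥) {u : Rˣ} {n : ℕ} (hn : 0 < n)
    (h : innerRingAut u ^ n = 1) : (u : R) ∈ (algebraMap k R).range := by
  have hcomm : ∀ x : R, Commute ((u ^ n : Rˣ) : R) x :=
    innerRingAut_eq_one_iff.1 (by rwa [map_pow])
  have hcentral : (u : R) ^ n ∈ Subalgebra.center k R :=
    Subalgebra.mem_center_iff.2 fun x => ((hcomm x).eq).symm
  rw [hcenter, Algebra.mem_bot] at hcentral
  exact IsAlgClosed.mem_range_algebraMap_of_pow_mem hn hcentral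

end Units

/-- let `R` be a `ℂ`-domain whose center is `ℂ·1`.  Any inner ring
automorphism `g` of `R` of finite order is the identity, and the implementing
unit is a scalar.  In particular, every nontrivial element of a finite group
acting faithfully on `R` by ring automorphisms acts by an outer automorphism. -/
theorem inner_finite_order_automorphism_is_identity
    (R : Type*) [Ring R] [IsDomain R] [Algebra ℂ R]
    (hcenter : Subalgebra.center ℂ R = ⊥) :
    (∀ (g : R ≃+* R), (∃ n : ℕ, 0 < n ∧ g ^ n = 1) →
      ∀ a : Rˣ, (∀ x : R, g x = (a : R) * x * ((a⁻¹ : Rˣ) : R)) →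
        g = RingEquiv.refl R ∧ ∃ c : ℂ, (a : R) = algebraMap ℂ R c) ∧
    (∀ (Γ : Type) [Group Γ] [Finite Γ] (act : Γ →* (R ≃+* R)),
      Function.Injective act → ∀ g : Γ, g ≠ 1 →
        ¬ ∃ a : Rˣ, ∀ x : R, act g x = (a : R) * x * ((a⁻¹ : Rˣ) : R)) := by
  refine ⟨fun g ⟨n, hn, hgn⟩ a ha => ?_, ?_⟩
  · have hg : g = Units.innerRingAut a := RingEquiv.ext ha
    obtain ⟨c, hc⟩ :=
      Units.val_mem_range_algebraMap_of_innerRingAut_pow_eq_one hcenter hn (hg ▸ hgn)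
    exact ⟨hg.trans (Units.innerRingAut_eq_one_of_mem_range ⟨c, hc⟩), c, hc.symm⟩
  · rintro Γ _ _ act hinj g hg ⟨a, ha⟩
    have hga : act g = Units.innerRingAut a := RingEquiv.ext ha
    have hscalar := Units.val_mem_range_algebraMap_of_innerRingAut_pow_eq_one hcenter
      (orderOf_pos g) (by rw [← hga, ← map_pow, pow_orderOf_eq_one, map_one])
    have hact : act g = act 1 :=
      (hga.trans (Units.innerRingAut_eq_one_of_mem_range hscalar)).trans (map_one act).symm
    exact hg (hinj hact)
end

section
/- Let Z be a commutative ring, let A be an Azumaya algebra over Z, and let R be a ring containing A as a subring such that Z is contained in the center of R. Then the multiplication map A ⊗_Z C_R(A) → R is an isomorphism, where C_R(A) = {r ∈ R : ra = ar for all a ∈ A} is the centralizer of A in R. -/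
/-! Let `(xᵢ, φᵢ)` be a dual basis of the `Z`-module `A` and let `tᵢ ∈ A ⊗ Aᵐᵒᵖ` correspond to the
endomorphism `x ↦ φᵢ(x) • 1` of `A`. Since `φᵢ(x) • 1` is central, `(a ⊗ 1) tᵢ = (1 ⊗ aᵒᵖ) tᵢ`,
so `tᵢ`, acting on `R` by `a ⊗ bᵒᵖ ↦ (r ↦ f a * r * f b)`, maps `R` into the centralizer `C`.
Then `r ↦ ∑ xᵢ ⊗ tᵢ r` inverts multiplication `A ⊗ C → R`: on one side `∑ (xᵢ ⊗ 1) tᵢ = 1`,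
on the other `tᵢ (f a * c) = φᵢ(a) • c` for `c ∈ C`. -/

open scoped TensorProduct

/-- The canonical map `A ⊗[Z] Aᵐᵒᵖ →ₐ[Z] End_Z(A)` sending `a ⊗ bᵒᵖ` to the map
`x ↦ a * x * b`. -/
noncomputable def mulLeftRightAlgHom (Z A : Type*) [CommRing Z] [Ring A] [Algebra Z A] :
    (A ⊗[Z] Aᵐᵒᵖ) →ₐ[Z] Module.End Z A :=
  Algebra.TensorProduct.lift (Algebra.lmul Z A) (Algebra.lsmul Z Z A (A := Aᵐᵒᵖ))
    (fun a b => LinearMap.ext fun x => (mul_assoc a x b.unop).symm)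

/-- An algebra `A` over a commutative ring `Z` is an Azumaya algebra if it is a
finitely generated projective faithful `Z`-module and the natural map
`A ⊗[Z] Aᵐᵒᵖ → End_Z(A)`, `a ⊗ bᵒᵖ ↦ (x ↦ a x b)`, is bijective. -/
def IsAzumayaAlgebra (Z A : Type*) [CommRing Z] [Ring A] [alg : Algebra Z A] : Prop :=
  Module.Finite Z A ∧ Module.Projective Z A ∧ FaithfulSMul Z A ∧
    Function.Bijective (mulLeftRightAlgHom Z A)

theorem Module.Projective.exists_dual_basis (R M : Type*) [CommSemiring R] [AddCommMonoid M]
    [Module R M] [Module.Finite R M] [Module.Projective R M] :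
    ∃ (n : ℕ) (x : Fin n → M) (φ : Fin n → Module.Dual R M), ∀ m, ∑ i, φ i m • x i = m := by
  obtain ⟨n, π, s, -, -, hπs⟩ := Module.Finite.exists_comp_eq_id_of_projective R M
  refine ⟨n, fun i => π (Pi.basisFun R (Fin n) i), fun i => LinearMap.proj i ∘ₗ s, fun m => ?_⟩
  conv_rhs => rw [← LinearMap.id_apply (R := R) m, ← hπs, LinearMap.comp_apply,
    ← (Pi.basisFun R (Fin n)).sum_repr (s m)]
  simp

section

variable {Z A R : Type*} [CommRing Z] [Ring A] [Algebra Z A] [Ring R] [Algebra Z R]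

theorem mulLeftRightAlgHom_tmul_apply (a : A) (b : Aᵐᵒᵖ) (x : A) :
    mulLeftRightAlgHom Z A (a ⊗ₜ b) x = a * x * b.unop :=
  (mul_assoc a x b.unop).symm

theorem tmul_one_mul_eq_one_tmul_op_mul (hinj : Function.Injective (mulLeftRightAlgHom Z A))
    {t : A ⊗[Z] Aᵐᵒᵖ} {l : Module.Dual Z A}
    (ht : mulLeftRightAlgHom Z A t = Algebra.linearMap Z A ∘ₗ l) (a : A) :
    (a ⊗ₜ 1) * t = (1 ⊗ₜ MulOpposite.op a) * t := by
  refine hinj (LinearMap.ext fun x => ?_)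
  simp only [map_mul, ht, Module.End.mul_apply, LinearMap.comp_apply,
    mulLeftRightAlgHom_tmul_apply, MulOpposite.unop_one, MulOpposite.unop_op, mul_one, one_mul]
  exact (Algebra.commutes _ a).symm

theorem sum_tmul_one_mul_eq_one (hinj : Function.Injective (mulLeftRightAlgHom Z A))
    {ι : Type*} [Fintype ι] {x : ι → A} {φ : ι → Module.Dual Z A}
    (hx : ∀ a, ∑ i, φ i a • x i = a) {t : ι → A ⊗[Z] Aᵐᵒᵖ}
    (ht : ∀ i, mulLeftRightAlgHom Z A (t i) = Algebra.linearMap Z A ∘ₗ φ i) :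
    ∑ i, (x i ⊗ₜ 1) * t i = 1 := by
  refine hinj (LinearMap.ext fun a => ?_)
  simp only [map_sum, map_mul, map_one, ht, LinearMap.sum_apply, Module.End.mul_apply,
    LinearMap.comp_apply, mulLeftRightAlgHom_tmul_apply, MulOpposite.unop_one, mul_one,
    Module.End.one_apply, Algebra.linearMap_apply]
  simp_rw [← Algebra.commutes, ← Algebra.smul_def]
  exact hx a

noncomputable def bimulAlgHom (f : A →ₐ[Z] R) : A ⊗[Z] Aᵐᵒᵖ →ₐ[Z] Module.End Z R :=
  (mulLeftRightAlgHom Z R).comp (Algebra.TensorProduct.map f (AlgHom.op f))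

theorem bimulAlgHom_tmul_apply (f : A →ₐ[Z] R) (a : A) (b : Aᵐᵒᵖ) (r : R) :
    bimulAlgHom f (a ⊗ₜ b) r = f a * r * f b.unop :=
  mulLeftRightAlgHom_tmul_apply _ _ r

theorem bimulAlgHom_apply_mul_of_mem_centralizer (f : A →ₐ[Z] R) (t : A ⊗[Z] Aᵐᵒᵖ) (a : A)
    {c : R} (hc : c ∈ Subalgebra.centralizer Z (Set.range f)) :
    bimulAlgHom f t (f a * c) = f (mulLeftRightAlgHom Z A t a) * c := by
  induction t using TensorProduct.induction_on with
  | zero => simp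
  | tmul a' b =>
    rw [bimulAlgHom_tmul_apply, mulLeftRightAlgHom_tmul_apply, mul_assoc, mul_assoc (f a),
      ← hc _ ⟨b.unop, rfl⟩]
    simp only [map_mul, mul_assoc]
  | add t t' ht ht' => simp only [map_add, LinearMap.add_apply, ht, ht', add_mul]

theorem bimulAlgHom_apply_mem_centralizer (f : A →ₐ[Z] R) {t : A ⊗[Z] Aᵐᵒᵖ}
    (ht : ∀ a, (a ⊗ₜ 1) * t = (1 ⊗ₜ MulOpposite.op a) * t) (r : R) :
    bimulAlgHom f t r ∈ Subalgebra.centralizer Z (Set.range f) := by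
  rintro _ ⟨a, rfl⟩
  simpa [bimulAlgHom_tmul_apply] using congr(bimulAlgHom f $(ht a) r)

noncomputable def bimulToCentralizer (f : A →ₐ[Z] R) {t : A ⊗[Z] Aᵐᵒᵖ}
    (ht : ∀ a, (a ⊗ₜ 1) * t = (1 ⊗ₜ MulOpposite.op a) * t) :
    R →ₗ[Z] Subalgebra.centralizer Z (Set.range f) where
  toFun r := ⟨bimulAlgHom f t r, bimulAlgHom_apply_mem_centralizer f ht r⟩
  map_add' _ _ := Subtype.ext (map_add _ _ _)
  map_smul' _ _ := Subtype.ext (map_smul _ _ _)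

theorem coe_bimulToCentralizer_apply (f : A →ₐ[Z] R) {t : A ⊗[Z] Aᵐᵒᵖ}
    (ht : ∀ a, (a ⊗ₜ 1) * t = (1 ⊗ₜ MulOpposite.op a) * t) (r : R) :
    (bimulToCentralizer f ht r : R) = bimulAlgHom f t r :=
  rfl

theorem bimulToCentralizer_apply_mul (f : A →ₐ[Z] R) {t : A ⊗[Z] Aᵐᵒᵖ}
    (ht : ∀ a, (a ⊗ₜ 1) * t = (1 ⊗ₜ MulOpposite.op a) * t) {l : Module.Dual Z A}
    (htl : mulLeftRightAlgHom Z A t = Algebra.linearMap Z A ∘ₗ l) (a : A)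
    (c : Subalgebra.centralizer Z (Set.range f)) :
    bimulToCentralizer f ht (f a * c) = l a • c := by
  refine Subtype.ext ?_
  rw [coe_bimulToCentralizer_apply, bimulAlgHom_apply_mul_of_mem_centralizer f _ _ c.2, htl,
    LinearMap.comp_apply, Algebra.linearMap_apply, AlgHom.commutes, ← Algebra.smul_def]
  rfl

noncomputable def mulCentralizerAlgHom (f : A →ₐ[Z] R) :
    A ⊗[Z] Subalgebra.centralizer Z (Set.range f) →ₐ[Z] R :=
  Algebra.TensorProduct.lift f (Subalgebra.centralizer Z (Set.range f)).val
    fun a c => (Subalgebra.mem_centralizer_iff Z).1 c.2 (f a) ⟨a, rfl⟩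

theorem mulCentralizerAlgHom_tmul (f : A →ₐ[Z] R) (a : A)
    (c : Subalgebra.centralizer Z (Set.range f)) :
    mulCentralizerAlgHom f (a ⊗ₜ c) = f a * c :=
  rfl

theorem mulCentralizerAlgHom_bijective (h : Function.Bijective (mulLeftRightAlgHom Z A))
    {ι : Type*} [Fintype ι] {x : ι → A} {φ : ι → Module.Dual Z A}
    (hx : ∀ a, ∑ i, φ i a • x i = a) (f : A →ₐ[Z] R) :
    Function.Bijective (mulCentralizerAlgHom f) := by
  choose t ht using fun i => h.2 (Algebra.linearMap Z A ∘ₗ φ i)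
  let μ : R →ₗ[Z] A ⊗[Z] Subalgebra.centralizer Z (Set.range f) :=
    ∑ i, TensorProduct.mk Z A _ (x i) ∘ₗ
      bimulToCentralizer f (tmul_one_mul_eq_one_tmul_op_mul h.1 (ht i))
  refine Function.bijective_iff_has_inverse.2 ⟨μ, fun u => ?_, fun r => ?_⟩
  · induction u using TensorProduct.induction_on with
    | zero => simp
    | tmul a c =>
      simp only [mulCentralizerAlgHom_tmul, μ, LinearMap.sum_apply, LinearMap.comp_apply,
        TensorProduct.mk_apply, bimulToCentralizer_apply_mul f _ (ht _), TensorProduct.tmul_smul,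
        TensorProduct.smul_tmul']
      rw [← TensorProduct.sum_tmul, hx]
    | add u u' hu hu' => rw [map_add, map_add, hu, hu']
  · calc mulCentralizerAlgHom f (μ r) = ∑ i, bimulAlgHom f ((x i ⊗ₜ 1) * t i) r := by
          simp only [μ, LinearMap.sum_apply, map_sum, map_mul, Module.End.mul_apply,
            bimulAlgHom_tmul_apply, coe_bimulToCentralizer_apply, MulOpposite.unop_one, map_one,
            mul_one, LinearMap.comp_apply, TensorProduct.mk_apply, mulCentralizerAlgHom_tmul]
      _ = r := by
          rw [← LinearMap.sum_apply, ← map_sum, sum_tmul_one_mul_eq_one h.1 hx ht, map_one,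
            Module.End.one_apply]

end

theorem azumaya_tensor_centralizer_bijective_general
    (Z : Type*) [CommRing Z]
    (A : Type*) [Ring A] [Algebra Z A]
    (R : Type*) [Ring R] [Algebra Z R]
    (hAz : IsAzumayaAlgebra Z A)
    (f : A →ₐ[Z] R) :
    Function.Bijective
      (Algebra.TensorProduct.lift f (Subalgebra.centralizer Z (Set.range f)).val
        (fun a c => (c.2 (f a) ⟨a, rfl⟩ : f a * (c : R) = (c : R) * f a))) := by
  obtain ⟨_, _, -, h⟩ := hAz
  obtain ⟨_, x, φ, hx⟩ := Module.Projective.exists_dual_basis Z A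
  exact mulCentralizerAlgHom_bijective h hx f

/-- let `Z` be a commutative ring, `A` an Azumaya algebra over
`Z`, and `R` a ring containing `A` as a subring (via an injective `Z`-algebra
map `f : A → R`) with `Z` contained in the center of `R`.  Then the
multiplication map `A ⊗[Z] C_R(A) → R` is an isomorphism, where `C_R(A)` is
the centralizer of `A` in `R`. -/
theorem azumaya_tensor_centralizer_bijective
    (Z : Type*) [CommRing Z]
    (A : Type*) [Ring A] [Algebra Z A]
    (R : Type*) [Ring R] [Algebra Z R]
    (hAz : IsAzumayaAlgebra Z A)
    (f : A →ₐ[Z] R) (hf : Function.Injective f) :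
    Function.Bijective
      (Algebra.TensorProduct.lift f (Subalgebra.centralizer Z (Set.range f)).val
        (fun a c => (c.2 (f a) ⟨a, rfl⟩ : f a * (c : R) = (c : R) * f a))) :=
  azumaya_tensor_centralizer_bijective_general Z A R hAz f
end

section
/- Let R = ⊕_{i∈ℤ} R_i be a ℤ-graded ring with no nonzero nilpotent elements. Then every central idempotent e of R (e² = e and e commutes with all elements of R) is homogeneous of degree 0, i.e., e ∈ R₀. -/
open scoped DirectSum
lemma aux_comp_zero {R : Type*} [Ring R] [IsReduced R] (A : ℤ → AddSubgroup R) [GradedRing A]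
    [∀ (i : ℤ) (x : A i), Decidable (x ≠ 0)]
    (d : ⨁ i, A i) (hmul : d * d = d) (n : ℤ)
    (hpair : ∀ i ∈ DFinsupp.support d, ∀ j ∈ DFinsupp.support d, i + j = n + n → i = n ∧ j = n)
    (hnn : n + n ∉ DFinsupp.support d) : d n = 0 := by
  classical
  have h1 : ((d * d) (n + n) : R) = d n * d n := by
    rw [DirectSum.coe_mul_apply, Finset.sum_eq_single (n, n)]
    · rintro ⟨i, j⟩ hij hne
      exfalso
      simp only [Finset.mem_filter, Finset.mem_product] at hij
      obtain ⟨hi, hj⟩ := hpair i hij.1.1 j hij.1.2 hij.2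
      exact hne (by simp [hi, hj])
    · intro h
      by_cases hn : n ∈ DFinsupp.support d
      · exact absurd (by simp [Finset.mem_filter, Finset.mem_product, hn]) h
      · rw [DFinsupp.notMem_support_iff.mp hn]
        simp
  rw [hmul, DFinsupp.notMem_support_iff.mp hnn] at h1
  have hz : ((d n : R)) = 0 := by
    refine IsReduced.eq_zero _ ⟨2, ?_⟩
    rw [pow_two, ← h1]
    rfl
  ext
  exact hz

/-- in a `ℤ`-graded ring with no nonzero nilpotent elements,
every central idempotent is homogeneous of degree `0`. -/
theorem central_idempotent_mem_degree_zero
    (R : Type*) [Ring R] [IsReduced R]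
    (A : ℤ → AddSubgroup R) [GradedRing A]
    (e : R) (he : IsIdempotentElem e) (hc : e ∈ Set.center R) :
    e ∈ A 0 := by
  classical
  set d := DirectSum.decompose A e with hdd
  have hmul : d * d = d := by
    rw [hdd, ← DirectSum.decompose_mul, he]
  have key : ∀ n ∈ DFinsupp.support d, n = 0 := by
    intro n hn
    by_contra hn0
    rcases lt_or_gt_of_ne hn0 with hneg | hpos
    · -- take min
      have hne : (DFinsupp.support d).Nonempty := ⟨n, hn⟩
      set N := (DFinsupp.support d).min' hne with hN
      have hNmem : N ∈ DFinsupp.support d := Finset.min'_mem _ _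
      have hNle : ∀ m ∈ DFinsupp.support d, N ≤ m := fun m hm => Finset.min'_le _ _ hm
      have hNneg : N < 0 := lt_of_le_of_lt (hNle n hn) hneg
      have : d N = 0 := by
        refine aux_comp_zero A d hmul N ?_ ?_
        · intro i hi j hj hij
          have := hNle i hi; have := hNle j hj; omega
        · intro h
          have := hNle _ h; omega
      rw [DFinsupp.mem_support_iff] at hNmem
      exact hNmem this
    · have hne : (DFinsupp.support d).Nonempty := ⟨n, hn⟩
      set N := (DFinsupp.support d).max' hne with hN
      have hNmem : N ∈ DFinsupp.support d := Finset.max'_mem _ _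
      have hNle : ∀ m ∈ DFinsupp.support d, m ≤ N := fun m hm => Finset.le_max' _ _ hm
      have hNpos : 0 < N := lt_of_lt_of_le hpos (hNle n hn)
      have : d N = 0 := by
        refine aux_comp_zero A d hmul N ?_ ?_
        · intro i hi j hj hij
          have := hNle i hi; have := hNle j hj; omega
        · intro h
          have := hNle _ h; omega
      rw [DFinsupp.mem_support_iff] at hNmem
      exact hNmem this
  rw [← DirectSum.sum_support_decompose A e]
  apply AddSubgroup.sum_mem
  intro i hi
  have h0 := key i hi
  subst h0
  exact (d 0).2
end

section
/- Let R be a ring equipped with an exhaustive increasing filtration 0 = F_{-1} ⊆ F_0 ⊆ F_1 ⊆ ⋯ by additive subgroups with 1 ∈ F_0, F_i·F_j ⊆ F_{i+j}, and ∪_i F_i = R, and suppose the associated graded ring gr R = ⊕_{i≥0} F_i/F_{i−1} is commutative and has no nonzero nilpotent elements. Let N ≥ 0 and let x ∈ R satisfy a monic equation x^m + f_1 x^{m−1} + ⋯ + f_m = 0 with all coefficients f_i ∈ F_N. Then x ∈ F_N. -/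
/-!
If `x` lies in `F d` with `d > N`, every lower term `f i * x ^ (m - 1 - i)` of the monic
relation lies in `F (m * d - 1)`, hence so does `x ^ m`: the principal symbol of `x` in degree
`d` is nilpotent. Multiplying by a further power of `x`, the symbol of `x ^ 2 ^ m` vanishes, and
`m` applications of reducedness (a symbol squaring to zero is zero) give `x ∈ F (d - 1)`.
Descending from any `F i` containing `x` ends at `F N`.
-/

namespace FilteredRing

variable {R : Type*} [Ring R] {F : ℤ → AddSubgroup R}

theorem mem_of_forall_lt_mem_sub_one (hmono : Monotone F) {N : ℤ} {x : R}
    (hstep : ∀ d, N < d → x ∈ F d → x ∈ F (d - 1)) (hx : ∃ i, x ∈ F i) : x ∈ F N := by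
  obtain ⟨i, hi⟩ := hx
  suffices ∀ n, N ≤ n → x ∈ F n → x ∈ F N from
    this _ (le_max_right i N) (hmono (le_max_left i N) hi)
  intro n hn
  induction n, hn using Int.leInduction with
  | base => exact id
  | succ n _ ih => exact fun h => ih (by simpa using hstep (n + 1) (by omega) h)

variable [SetLike.GradedMonoid F]

theorem mem_sub_one_of_pow_two_pow_mem
    (hred : ∀ (n : ℤ) (x : R), x ∈ F n → x * x ∈ F (2 * n - 1) → x ∈ F (n - 1))
    {d : ℤ} {y : R} (hy : y ∈ F d) :
    ∀ k : ℕ, y ^ 2 ^ k ∈ F (2 ^ k * d - 1) → y ∈ F (d - 1)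
  | 0, h => by simpa using h
  | k + 1, h => by
    refine mem_sub_one_of_pow_two_pow_mem hred hy k (hred _ _ ?_ ?_)
    · simpa using SetLike.pow_mem_graded (2 ^ k) hy
    · rw [← pow_add, ← two_mul, ← pow_succ']
      convert h using 2
      ring

theorem mem_sub_one_of_pow_mem
    (hred : ∀ (n : ℤ) (x : R), x ∈ F n → x * x ∈ F (2 * n - 1) → x ∈ F (n - 1))
    {d : ℤ} {y : R} (hy : y ∈ F d) {k : ℕ} (hk : y ^ k ∈ F (k * d - 1)) :
    y ∈ F (d - 1) := by
  refine mem_sub_one_of_pow_two_pow_mem hred hy k ?_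
  have hle : k ≤ 2 ^ k := Nat.lt_two_pow_self.le
  have hprod := SetLike.mul_mem_graded (SetLike.pow_mem_graded (2 ^ k - k) hy) hk
  rw [← pow_add, Nat.sub_add_cancel hle] at hprod
  convert hprod using 2
  push_cast [Nat.cast_sub hle, nsmul_eq_mul]
  ring

theorem pow_mem_of_monic_eq_zero (hmono : Monotone F) {N d : ℤ} (hNd : N < d) (hd : 0 ≤ d)
    {m : ℕ} {f : Fin m → R} (hf : ∀ i, f i ∈ F N) {x : R} (hx : x ∈ F d)
    (heq : x ^ m + ∑ i : Fin m, f i * x ^ (m - 1 - (i : ℕ)) = 0) :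
    x ^ m ∈ F (m * d - 1) := by
  rw [eq_neg_of_add_eq_zero_left heq]
  refine neg_mem (sum_mem fun i _ => hmono ?_ <|
    SetLike.mul_mem_graded (hf i) (SetLike.pow_mem_graded (m - 1 - i) hx))
  have hi : ((m - 1 - i : ℕ) : ℤ) ≤ m - 1 := by omega
  rw [nsmul_eq_mul]
  nlinarith

end FilteredRing

open FilteredRing in
theorem integral_element_mem_filtration_general
    (R : Type*) [Ring R] (F : ℤ → AddSubgroup R)
    (hmono : Monotone F)
    (hone : (1 : R) ∈ F 0)
    (hmul : ∀ (i j : ℤ) (x y : R), x ∈ F i → y ∈ F j → x * y ∈ F (i + j))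
    (hexh : ∀ x : R, ∃ i : ℤ, x ∈ F i)
    (hred : ∀ (n : ℤ) (x : R), x ∈ F n → x * x ∈ F (2 * n - 1) → x ∈ F (n - 1))
    (N : ℤ) (hN : 0 ≤ N) (m : ℕ) (f : Fin m → R)
    (hf : ∀ i : Fin m, f i ∈ F N) (x : R)
    (heq : x ^ m + ∑ i : Fin m, f i * x ^ (m - 1 - (i : ℕ)) = 0) :
    x ∈ F N := by
  have : SetLike.GradedMonoid F :=
    { one_mem := hone, mul_mem := fun _ _ _ _ ha hb => hmul _ _ _ _ ha hb }
  refine mem_of_forall_lt_mem_sub_one hmono (fun d hd hx => ?_) (hexh x)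
  exact mem_sub_one_of_pow_mem hred hx
    (pow_mem_of_monic_eq_zero hmono hd (by omega) hf hx heq)

/-- Let `R` be a ring with an exhaustive increasing filtration
`F` (indexed by `ℤ`, with `F i = 0` for `i < 0`, `1 ∈ F 0`, `F i * F j ⊆ F (i+j)`
and `⋃ i, F i = R`) whose associated graded ring is commutative (expressed
elementwise: commutators drop filtration degree) and has no nonzero nilpotent
elements (expressed elementwise: if the principal symbol of an element of `F n`
squares to zero, it is zero, i.e. `x ∈ F n` and `x * x ∈ F (2n - 1)` imply
`x ∈ F (n-1)`).  If `x ∈ R` satisfies a monic equation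
`x ^ m + f 0 * x ^ (m-1) + ⋯ + f (m-1) = 0` with all coefficients `f i ∈ F N`,
then `x ∈ F N`. -/
theorem integral_element_mem_filtration
    (R : Type*) [Ring R] (F : ℤ → AddSubgroup R)
    (hneg : ∀ i : ℤ, i < 0 → F i = ⊥)
    (hmono : Monotone F)
    (hone : (1 : R) ∈ F 0)
    (hmul : ∀ (i j : ℤ) (x y : R), x ∈ F i → y ∈ F j → x * y ∈ F (i + j))
    (hexh : ∀ x : R, ∃ i : ℤ, x ∈ F i)
    (hcomm : ∀ (i j : ℤ) (x y : R), x ∈ F i → y ∈ F j →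
      x * y - y * x ∈ F (i + j - 1))
    (hred : ∀ (n : ℤ) (x : R), x ∈ F n → x * x ∈ F (2 * n - 1) → x ∈ F (n - 1))
    (N : ℤ) (hN : 0 ≤ N) (m : ℕ) (hm : 0 < m) (f : Fin m → R)
    (hf : ∀ i : Fin m, f i ∈ F N) (x : R)
    (heq : x ^ m + ∑ i : Fin m, f i * x ^ (m - 1 - (i : ℕ)) = 0) :
    x ∈ F N :=
  integral_element_mem_filtration_general R F hmono hone hmul hexh hred N hN m f hf x heq
end
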